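/- arXiv:2601.09409 — 5 statements merged into one kernel-verified Lean document; each statement's English description precedes it below -/
import Mathlib

section
/- Let S be a semiring and Σ an alphabet. A formal power series r : List Σ → S belongs to Rev(S,Σ) if and only if r is a finite sum of series from Rev₁(S,Σ), i.e., there exist k : ℕ and series r₁, …, r_k ∈ Rev₁(S,Σ) such that r = r₁ + … + r_k (pointwise sum, with the empty sum being the zero series). -/
open Matrix

namespace RevWA

/-- A weighted automaton over a semiring `S` and alphabet `α`, given by a linear
representation: number of states `n`, initial weight vector, transition matrices,
and final weight vector. -/
structure WA (S : Type) [Semiring S] (α : Type) where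
  n : ℕ
  init : Fin n → S
  trans : α → Matrix (Fin n) (Fin n) S
  final : Fin n → S

variable {S : Type} [Semiring S] {α : Type}

/-- The matrix associated to a word: product of the transition matrices of its letters. -/
def WA.matWord (A : WA S α) (w : List α) : Matrix (Fin A.n) (Fin A.n) S :=
  (w.map A.trans).prod

/-- The series realized by a weighted automaton: `i ⬝ μ(w) ⬝ f`. -/
def WA.series (A : WA S α) : List α → S :=
  fun w => A.init ⬝ᵥ (A.matWord w).mulVec A.final

/-- A matrix has at most one nonzero entry in each row. -/
def rowOk {n : ℕ} (M : Matrix (Fin n) (Fin n) S) : Prop :=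
  ∀ i j j', M i j ≠ 0 → M i j' ≠ 0 → j = j'

/-- A matrix has at most one nonzero entry in each column. -/
def colOk {n : ℕ} (M : Matrix (Fin n) (Fin n) S) : Prop :=
  ∀ i i' j, M i j ≠ 0 → M i' j ≠ 0 → i = i'

/-- A weighted automaton is reversible if each transition matrix has at most one
nonzero entry in each row and at most one nonzero entry in each column. -/
def WA.Reversible (A : WA S α) : Prop :=
  ∀ a : α, rowOk (A.trans a) ∧ colOk (A.trans a)

/-- A weighted automaton has exactly one initial state. -/
def WA.OneInitial (A : WA S α) : Prop :=
  ∃! q : Fin A.n, A.init q ≠ 0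

/-- `Rev S α`: series realized by reversible weighted automata over `S` and `α`. -/
def Rev (S : Type) [Semiring S] (α : Type) : Set (List α → S) :=
  {r | ∃ A : WA S α, A.Reversible ∧ A.series = r}

/-- `Rev₁ S α`: series realized by reversible weighted automata over `S` and `α`
with exactly one initial state. -/
def Rev1 (S : Type) [Semiring S] (α : Type) : Set (List α → S) :=
  {r | ∃ A : WA S α, A.Reversible ∧ A.OneInitial ∧ A.series = r}

/-- The support of a series. -/
def supp (r : List α → S) : Set (List α) :=
  {w | r w ≠ 0}

/-- `RevL S α`: supports of series realized by reversible weighted automata. -/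
def RevL (S : Type) [Semiring S] (α : Type) : Set (Set (List α)) :=
  {L | ∃ r ∈ Rev S α, supp r = L}

/-- `RevL₁ S α`: supports of series realized by reversible weighted automata with
exactly one initial state. -/
def RevL1 (S : Type) [Semiring S] (α : Type) : Set (Set (List α)) :=
  {L | ∃ r ∈ Rev1 S α, supp r = L}

/-- The characteristic series of a language `L` over `S`. -/
noncomputable def charSeries (S : Type) [Semiring S] {α : Type} (L : Set (List α)) :
    List α → S :=
  L.indicator 1

/-- A reversible nondeterministic finite automaton: deterministic and
codeterministic transition relation. -/
structure RevNFA (α : Type) where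
  Q : Type
  fintypeQ : Fintype Q
  δ : Q → α → Q → Prop
  I : Set Q
  F : Set Q
  det : ∀ p a q q', δ p a q → δ p a q' → q = q'
  codet : ∀ p p' a q, δ p a q → δ p' a q → p = p'

/-- Paths in a reversible NFA. -/
inductive RevNFA.Path {α : Type} (A : RevNFA α) : A.Q → List α → A.Q → Prop
  | nil (q : A.Q) : RevNFA.Path A q [] q
  | cons {p q r : A.Q} {a : α} {w : List α} :
      A.δ p a q → RevNFA.Path A q w r → RevNFA.Path A p (a :: w) r

/-- The language recognized by a reversible NFA. -/
def RevNFA.lang {α : Type} (A : RevNFA α) : Set (List α) :=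
  {w | ∃ p ∈ A.I, ∃ q ∈ A.F, A.Path p w q}

/-- A reversible NFA has exactly one initial state. -/
def RevNFA.OneInitial {α : Type} (A : RevNFA α) : Prop :=
  ∃ q : A.Q, A.I = {q}

/-- `RevL(𝔹,α)`: languages recognized by reversible NFAs. -/
def RevLB (α : Type) : Set (Set (List α)) :=
  {L | ∃ A : RevNFA α, A.lang = L}

/-- `RevL₁(𝔹,α)`: languages recognized by reversible NFAs with exactly one
initial state. -/
def RevL1B (α : Type) : Set (Set (List α)) :=
  {L | ∃ A : RevNFA α, A.OneInitial ∧ A.lang = L}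

end RevWA

/-!
A reversible automaton is the sum of the automata obtained by keeping a single initial weight:
the transitions are untouched, so each of them is reversible with at most one initial state,
and the ones with no initial state realize the zero series, which lies in `Rev₁` as soon as
`1 ≠ 0`. Conversely `Rev` contains `0` and is closed under sums, via the block-diagonal sum
of automata.
-/

namespace Matrix

variable {S : Type*} [Semiring S] {l m n o : Type*}

def RowOk (M : Matrix m n S) : Prop :=
  ∀ i j j', M i j ≠ 0 → M i j' ≠ 0 → j = j'

theorem RowOk.submatrix {M : Matrix m n S} (hM : M.RowOk) (r : l → m) {c : o → n}
    (hc : Function.Injective c) : (M.submatrix r c).RowOk :=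
  fun i j j' h h' => hc (hM (r i) (c j) (c j') h h')

theorem RowOk.fromBlocks_zero {A : Matrix l m S} {B : Matrix n o S} (hA : A.RowOk)
    (hB : B.RowOk) : (fromBlocks A 0 0 B).RowOk := by
  rintro (i | i) (j | j) (j' | j') h h' <;>
    simp only [fromBlocks_apply₁₁, fromBlocks_apply₁₂, fromBlocks_apply₂₁,
      fromBlocks_apply₂₂, zero_apply, ne_eq, not_true_eq_false] at h h'
  · exact congrArg Sum.inl (hA i j j' h h')
  · exact congrArg Sum.inr (hB i j j' h h')

theorem rowOk_zero : (0 : Matrix m n S).RowOk :=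
  fun _ _ _ h => absurd rfl h

end Matrix

namespace RevWA

variable {S : Type} [Semiring S] {α : Type}

theorem rowOk_iff {n : ℕ} {M : Matrix (Fin n) (Fin n) S} : rowOk M ↔ M.RowOk :=
  Iff.rfl

theorem colOk_iff {n : ℕ} {M : Matrix (Fin n) (Fin n) S} : colOk M ↔ Mᵀ.RowOk :=
  ⟨fun h j i i' => h i i' j, fun h i i' j => h j i i'⟩

theorem reversible_of_trans_eq_zero {A : WA S α} (h : A.trans = 0) : A.Reversible := by
  intro a
  rw [rowOk_iff, colOk_iff, h, Pi.zero_apply, transpose_zero]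
  exact ⟨rowOk_zero, rowOk_zero⟩

namespace WA

@[simp]
theorem matWord_nil (A : WA S α) : A.matWord [] = 1 := rfl

@[simp]
theorem matWord_cons (A : WA S α) (a : α) (w : List α) :
    A.matWord (a :: w) = A.trans a * A.matWord w := rfl

abbrev restrictInit (A : WA S α) (q : Fin A.n) : WA S α :=
  { A with init := Pi.single q (A.init q) }

theorem series_eq_sum_restrictInit (A : WA S α) :
    A.series = ∑ q, (A.restrictInit q).series := by
  funext w
  show ∑ q, A.init q * (A.matWord w *ᵥ A.final) q = _
  rw [Finset.sum_apply]
  exact Fintype.sum_congr _ _ fun q =>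
    (single_dotProduct (v := A.matWord w *ᵥ A.final) (A.init q) q).symm

theorem restrictInit_oneInitial (A : WA S α) {q : Fin A.n} (hq : A.init q ≠ 0) :
    (A.restrictInit q).OneInitial :=
  ⟨q, by simpa [restrictInit] using hq, fun p hp => by
    by_contra hpq
    exact hp (Pi.single_eq_of_ne hpq _)⟩

theorem restrictInit_series_of_init_eq_zero (A : WA S α) {q : Fin A.n} (hq : A.init q = 0) :
    (A.restrictInit q).series = 0 := by
  funext w
  simp [series, restrictInit, hq]

abbrev zero : WA S α := ⟨1, 1, 0, 0⟩

theorem zero_series : (zero : WA S α).series = 0 := by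
  funext w
  simp [series]

theorem zero_reversible : (zero : WA S α).Reversible :=
  reversible_of_trans_eq_zero rfl

theorem zero_oneInitial [Nontrivial S] : (zero : WA S α).OneInitial :=
  ⟨0, one_ne_zero, fun p _ => Subsingleton.elim p 0⟩

abbrev sum (A B : WA S α) : WA S α where
  n := A.n + B.n
  init := Sum.elim A.init B.init ∘ finSumFinEquiv.symm
  trans a := (fromBlocks (A.trans a) 0 0 (B.trans a)).submatrix
      finSumFinEquiv.symm finSumFinEquiv.symm
  final := Sum.elim A.final B.final ∘ finSumFinEquiv.symm

theorem sum_matWord (A B : WA S α) (w : List α) :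
    (A.sum B).matWord w =
      (fromBlocks (A.matWord w) 0 0 (B.matWord w)).submatrix
        finSumFinEquiv.symm finSumFinEquiv.symm := by
  induction w with
  | nil => simp [fromBlocks_one, submatrix_one_equiv]
  | cons a w ih =>
    rw [matWord_cons, matWord_cons, matWord_cons, ih]
    simp [sum, submatrix_mul_equiv, fromBlocks_multiply]

theorem sum_series (A B : WA S α) : (A.sum B).series = A.series + B.series := by
  funext w
  simp only [series, sum_matWord, Pi.add_apply]
  rw [submatrix_mulVec_equiv, ← comp_equiv_dotProduct_comp_equiv _ _ finSumFinEquiv]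
  simp [Function.comp_def, fromBlocks_mulVec, sumElim_dotProduct_sumElim]

theorem sum_reversible {A B : WA S α} (hA : A.Reversible) (hB : B.Reversible) :
    (A.sum B).Reversible := by
  intro a
  obtain ⟨hAr, hAc⟩ := hA a
  obtain ⟨hBr, hBc⟩ := hB a
  rw [rowOk_iff] at hAr hBr ⊢
  rw [colOk_iff] at hAc hBc ⊢
  refine ⟨(hAr.fromBlocks_zero hBr).submatrix _ finSumFinEquiv.symm.injective, ?_⟩
  simp only [sum, transpose_submatrix, fromBlocks_transpose, transpose_zero]
  exact (hAc.fromBlocks_zero hBc).submatrix _ finSumFinEquiv.symm.injective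

end WA

theorem rev1_subset_rev : Rev1 S α ⊆ Rev S α :=
  fun _ ⟨A, hA, _, hr⟩ => ⟨A, hA, hr⟩

theorem zero_mem_rev1 [Nontrivial S] : (0 : List α → S) ∈ Rev1 S α :=
  ⟨WA.zero, WA.zero_reversible, WA.zero_oneInitial, WA.zero_series⟩

variable (S α) in
def revAddSubmonoid : AddSubmonoid (List α → S) where
  carrier := Rev S α
  zero_mem' := ⟨WA.zero, WA.zero_reversible, WA.zero_series⟩
  add_mem' := by
    rintro _ _ ⟨A, hA, rfl⟩ ⟨B, hB, rfl⟩
    exact ⟨A.sum B, WA.sum_reversible hA hB, WA.sum_series A B⟩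

theorem restrictInit_series_mem_rev1 [Nontrivial S] {A : WA S α} (hA : A.Reversible)
    (q : Fin A.n) : (A.restrictInit q).series ∈ Rev1 S α := by
  by_cases hq : A.init q = 0
  · rw [A.restrictInit_series_of_init_eq_zero hq]
    exact zero_mem_rev1
  · exact ⟨A.restrictInit q, hA, A.restrictInit_oneInitial hq, rfl⟩

end RevWA

open RevWA in
theorem stmt0_general (S : Type) [Semiring S] (α : Type)
    (r : List α → S) :
    r ∈ Rev S α ↔
      ∃ (k : ℕ) (f : Fin k → (List α → S)),
        (∀ i : Fin k, f i ∈ Rev1 S α) ∧ r = ∑ i : Fin k, f i := by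
  constructor
  · rintro ⟨A, hA, rfl⟩
    rcases subsingleton_or_nontrivial S with hS | hS
    · exact ⟨0, Fin.elim0, fun i => i.elim0, Subsingleton.elim _ _⟩
    · exact ⟨A.n, _, restrictInit_series_mem_rev1 hA, A.series_eq_sum_restrictInit⟩
  · rintro ⟨k, f, hf, rfl⟩
    exact (revAddSubmonoid S α).sum_mem fun i _ => rev1_subset_rev (hf i)

open RevWA in
theorem stmt0 (S : Type) [Semiring S] (α : Type) [Fintype α] [Nonempty α]
    (r : List α → S) :
    r ∈ Rev S α ↔
      ∃ (k : ℕ) (f : Fin k → (List α → S)),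
        (∀ i : Fin k, f i ∈ Rev1 S α) ∧ r = ∑ i : Fin k, f i :=
  stmt0_general S α r
end

section
/- Let S be a semiring and Σ an alphabet. The set Rev(S,Σ) is closed under pointwise addition and under left and right scalar multiplication: if r, s ∈ Rev(S,Σ) and α ∈ S, then the series r + s, w ↦ α · r(w), and w ↦ r(w) · α all belong to Rev(S,Σ). -/
open Matrix

/-! The three constructions keep the transition matrices reversible. For `r + s` take the
disjoint union of the two automata: its transition matrices are block diagonal, so every row and
column still has at most one nonzero entry, and the realized series splits into the two blocks.
For `a * r` and `r * a` it suffices to scale the initial vector on the left, respectively the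
final vector on the right, leaving the transitions untouched; in a noncommutative semiring the
right scaling is the action of `MulOpposite.op a`. -/

namespace RevWA

variable {S : Type} [Semiring S]

theorem list_prod_map_fromBlocks {ι m n : Type} [Fintype m] [Fintype n] [DecidableEq m]
    [DecidableEq n] (l : List ι) (f : ι → Matrix m m S) (g : ι → Matrix n n S) :
    (l.map fun a => fromBlocks (f a) 0 0 (g a)).prod =
      fromBlocks (l.map f).prod 0 0 (l.map g).prod := by
  induction l with
  | nil => simp [fromBlocks_one]
  | cons a l ih => simp [ih, fromBlocks_multiply]

theorem dotProduct_reindex_mulVec {m n : Type} [Fintype m] [Fintype n] (e : m ≃ n)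
    (u v : m → S) (M : Matrix m m S) :
    u ∘ e.symm ⬝ᵥ reindex e e M *ᵥ v ∘ e.symm = u ⬝ᵥ M *ᵥ v := by
  simp [reindex_apply, submatrix_mulVec_equiv, Function.comp_assoc]

theorem colOk_iff_rowOk_transpose {n : ℕ} {M : Matrix (Fin n) (Fin n) S} :
    colOk M ↔ rowOk Mᵀ :=
  ⟨fun h i j j' => h j j' i, fun h i i' j => h j i i'⟩

theorem rowOk_reindex_fromBlocks {n₁ n₂ : ℕ} {M : Matrix (Fin n₁) (Fin n₁) S}
    {N : Matrix (Fin n₂) (Fin n₂) S} (hM : rowOk M) (hN : rowOk N) :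
    rowOk (reindex finSumFinEquiv finSumFinEquiv (fromBlocks M 0 0 N)) := by
  intro i j j'
  rw [← finSumFinEquiv.symm.injective.eq_iff]
  simp only [reindex_apply, submatrix_apply]
  generalize finSumFinEquiv.symm i = x, finSumFinEquiv.symm j = y, finSumFinEquiv.symm j' = y'
  rcases x with p | p <;> rcases y with q | q <;> rcases y' with q' | q' <;>
    simp only [fromBlocks_apply₁₁, fromBlocks_apply₁₂, fromBlocks_apply₂₁, fromBlocks_apply₂₂,
      Matrix.zero_apply, ne_eq, not_true_eq_false, false_implies, Sum.inl.injEq,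
      Sum.inr.injEq, reduceCtorEq, implies_true]
  exacts [hM p q q', hN p q q']

theorem colOk_reindex_fromBlocks {n₁ n₂ : ℕ} {M : Matrix (Fin n₁) (Fin n₁) S}
    {N : Matrix (Fin n₂) (Fin n₂) S} (hM : colOk M) (hN : colOk N) :
    colOk (reindex finSumFinEquiv finSumFinEquiv (fromBlocks M 0 0 N)) := by
  rw [colOk_iff_rowOk_transpose] at *
  rw [transpose_reindex, fromBlocks_transpose, transpose_zero, transpose_zero]
  exact rowOk_reindex_fromBlocks hM hN

variable {α : Type}

def WA.sum_s1 (A B : WA S α) : WA S α where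
  n := A.n + B.n
  init := Sum.elim A.init B.init ∘ finSumFinEquiv.symm
  trans a := reindex finSumFinEquiv finSumFinEquiv (fromBlocks (A.trans a) 0 0 (B.trans a))
  final := Sum.elim A.final B.final ∘ finSumFinEquiv.symm

theorem WA.sum_matWord_s1 (A B : WA S α) (w : List α) :
    (A.sum_s1 B).matWord w =
      reindex finSumFinEquiv finSumFinEquiv (fromBlocks (A.matWord w) 0 0 (B.matWord w)) := by
  rw [← coe_reindexRingEquiv, WA.matWord, WA.matWord, WA.matWord, ← list_prod_map_fromBlocks,
    map_list_prod, List.map_map]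
  rfl

theorem WA.sum_series_s1 (A B : WA S α) : (A.sum_s1 B).series = A.series + B.series := by
  funext w
  rw [WA.series, WA.sum_matWord_s1]
  refine (dotProduct_reindex_mulVec finSumFinEquiv (Sum.elim A.init B.init)
    (Sum.elim A.final B.final) _).trans ?_
  rw [fromBlocks_mulVec, sumElim_dotProduct_sumElim]
  simp [WA.series]

theorem WA.Reversible.sum_s1 {A B : WA S α} (hA : A.Reversible) (hB : B.Reversible) :
    (A.sum_s1 B).Reversible := fun a =>
  ⟨rowOk_reindex_fromBlocks (hA a).1 (hB a).1, colOk_reindex_fromBlocks (hA a).2 (hB a).2⟩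

def WA.smulInit (a : S) (A : WA S α) : WA S α := { A with init := a • A.init }

def WA.mulFinal (A : WA S α) (a : S) : WA S α := { A with final := MulOpposite.op a • A.final }

theorem WA.smulInit_series (a : S) (A : WA S α) (w : List α) :
    (A.smulInit a).series w = a * A.series w :=
  smul_dotProduct a _ _

theorem WA.mulFinal_series (A : WA S α) (a : S) (w : List α) :
    (A.mulFinal a).series w = A.series w * a := by
  change A.init ⬝ᵥ A.matWord w *ᵥ (MulOpposite.op a • A.final) = _
  rw [mulVec_smul, dotProduct_smul, op_smul_eq_mul, WA.series]

end RevWA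

open RevWA in
theorem stmt1_general (S : Type) [Semiring S] (α : Type)
    (r s : List α → S) (a : S) (hr : r ∈ Rev S α) (hs : s ∈ Rev S α) :
    r + s ∈ Rev S α ∧
      (fun w => a * r w) ∈ Rev S α ∧
      (fun w => r w * a) ∈ Rev S α := by
  obtain ⟨A, hA, rfl⟩ := hr
  obtain ⟨B, hB, rfl⟩ := hs
  exact ⟨⟨A.sum_s1 B, hA.sum_s1 hB, A.sum_series_s1 B⟩,
    ⟨A.smulInit a, hA, funext (A.smulInit_series a)⟩,
    ⟨A.mulFinal a, hA, funext (A.mulFinal_series a)⟩⟩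

open RevWA in
theorem stmt1 (S : Type) [Semiring S] (α : Type) [Fintype α] [Nonempty α]
    (r s : List α → S) (a : S) (hr : r ∈ Rev S α) (hs : s ∈ Rev S α) :
    r + s ∈ Rev S α ∧
      (fun w => a * r w) ∈ Rev S α ∧
      (fun w => r w * a) ∈ Rev S α :=
  stmt1_general S α r s a hr hs
end

section
/- Let S be a nontrivial semiring (i.e., (0 : S) ≠ 1), Σ an alphabet, and L a language recognized by a reversible NFA over Σ with exactly one initial state. Then the characteristic series 𝟙_L of L over S belongs to Rev₁(S,Σ); consequently L = supp(𝟙_L) is the support of a series in Rev₁(S,Σ). -/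
open Matrix

/-!
A reversible NFA becomes a weighted automaton by taking the 0/1 incidence matrices of its
letters. Since the automaton is deterministic, the product of the matrices along a word is again
the 0/1 matrix of the path relation (no entry ever sums two ones), and with a single initial state
the realized value `i ⬝ μ(w) ⬝ f` counts the at most one accepting path, i.e. it is `𝟙_L(w)`.
Codeterminism makes every incidence matrix have at most one nonzero entry per column.
-/

-- The instance on the right is left to unification, so that the lemma also matches `ite`s
-- whose decidability instance is classical.
theorem Fintype.sum_boole_of_subsingleton {S ι : Type} [Semiring S] [Fintype ι] {p : ι → Prop}
    [DecidablePred p] {_ : Decidable (∃ j, p j)} (hp : ∀ j j', p j → p j' → j = j') :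
    ∑ j, (if p j then (1 : S) else 0) = if ∃ j, p j then 1 else 0 := by
  split_ifs with h
  · obtain ⟨j, hj⟩ := h
    rw [Finset.sum_eq_single j (fun k _ hk => if_neg fun hpk => hk (hp k j hpk hj))
      (fun hj' => absurd (Finset.mem_univ j) hj'), if_pos hj]
  · exact Finset.sum_eq_zero fun j _ => if_neg fun hj => h ⟨j, hj⟩

namespace RevWA

theorem WA.matWord_cons_s2 {S α : Type} [Semiring S] (A : WA S α) (a : α) (w : List α) :
    A.matWord (a :: w) = A.trans a * A.matWord w :=
  List.prod_cons

section RelMatrix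

open Classical

variable {S : Type} [Semiring S] {ι : Type}

noncomputable def relMatrix (R : ι → ι → Prop) : Matrix ι ι S :=
  of fun i j => if R i j then 1 else 0

theorem relMatrix_apply (R : ι → ι → Prop) (i j : ι) :
    (relMatrix R : Matrix ι ι S) i j = if R i j then 1 else 0 :=
  rfl

theorem rel_of_relMatrix_ne_zero {R : ι → ι → Prop} {i j : ι}
    (h : (relMatrix R : Matrix ι ι S) i j ≠ 0) : R i j := by
  by_contra hR
  exact h (if_neg hR)

variable [Fintype ι]

theorem relMatrix_mul_relMatrix {R T : ι → ι → Prop} (hR : ∀ i j j', R i j → R i j' → j = j') :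
    (relMatrix R * relMatrix T : Matrix ι ι S) = relMatrix fun i k => ∃ j, R i j ∧ T j k := by
  ext i k
  simp only [mul_apply, relMatrix_apply, ite_zero_mul_ite_zero, one_mul]
  apply Fintype.sum_boole_of_subsingleton
  exact fun j j' h h' => hR i j j' h.1 h'.1

theorem relMatrix_mulVec_indicator {R : ι → ι → Prop} (hR : ∀ i j j', R i j → R i j' → j = j')
    (s : Set ι) :
    (relMatrix R : Matrix ι ι S) *ᵥ s.indicator 1 = {i | ∃ j, R i j ∧ j ∈ s}.indicator 1 := by
  ext i
  simp only [mulVec, dotProduct, relMatrix_apply, Set.indicator_apply, Pi.one_apply,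
    ite_zero_mul_ite_zero, one_mul, Set.mem_ofPred_eq]
  apply Fintype.sum_boole_of_subsingleton
  exact fun j j' h h' => hR i j j' h.1 h'.1

end RelMatrix

namespace RevNFA

variable {α : Type} (A : RevNFA α)

theorem path_nil_iff {p q : A.Q} : A.Path p [] q ↔ p = q :=
  ⟨fun | .nil _ => rfl, fun h => h ▸ .nil p⟩

theorem path_cons_iff {p q : A.Q} {a : α} {w : List α} :
    A.Path p (a :: w) q ↔ ∃ x, A.δ p a x ∧ A.Path x w q :=
  ⟨fun | .cons hd ht => ⟨_, hd, ht⟩, fun ⟨_, hd, ht⟩ => .cons hd ht⟩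

theorem path_det {w : List α} {p q q' : A.Q} (h : A.Path p w q) (h' : A.Path p w q') :
    q = q' := by
  induction h with
  | nil => cases h'; rfl
  | cons hd _ ih =>
    cases h' with
    | cons hd' ht' => exact ih (A.det _ _ _ _ hd' hd ▸ ht')

attribute [local instance] RevNFA.fintypeQ

noncomputable abbrev toWA (S : Type) [Semiring S] : WA S α where
  n := Fintype.card A.Q
  init := A.I.indicator 1 ∘ (Fintype.equivFin A.Q).symm
  trans a := (relMatrix fun p q => A.δ p a q).submatrix (Fintype.equivFin A.Q).symm
    (Fintype.equivFin A.Q).symm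
  final := A.F.indicator 1 ∘ (Fintype.equivFin A.Q).symm

variable {S : Type} [Semiring S]

theorem toWA_matWord (w : List α) :
    (A.toWA S).matWord w = (relMatrix fun p q => A.Path p w q).submatrix
      (Fintype.equivFin A.Q).symm (Fintype.equivFin A.Q).symm := by
  induction w with
  | nil =>
    ext i j
    rw [submatrix_apply, relMatrix_apply]
    simp only [WA.matWord, List.map_nil, List.prod_nil, path_nil_iff, one_apply,
      Equiv.apply_eq_iff_eq]
  | cons a w ih =>
    rw [WA.matWord_cons_s2, ih]
    refine (submatrix_mul_equiv _ _ _ _ _).trans ?_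
    simp_rw [relMatrix_mul_relMatrix fun p => A.det p a, path_cons_iff]

theorem toWA_series (w : List α) :
    (A.toWA S).series w = A.I.indicator 1 ⬝ᵥ
      ((relMatrix fun p q => A.Path p w q) *ᵥ A.F.indicator 1) := by
  rw [WA.series, toWA_matWord, submatrix_mulVec_equiv, comp_equiv_symm_dotProduct]
  simp only [Function.comp_assoc, Equiv.self_comp_symm, Equiv.symm_comp_self, Function.comp_id]

theorem mem_lang_iff_of_I_eq_singleton {q₀ : A.Q} (hI : A.I = {q₀}) {w : List α} :
    w ∈ A.lang ↔ ∃ q, A.Path q₀ w q ∧ q ∈ A.F := by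
  simp only [lang, hI, Set.mem_singleton_iff, exists_eq_left, Set.mem_ofPred_eq]
  exact ⟨fun ⟨q, hq, hp⟩ => ⟨q, hp, hq⟩, fun ⟨q, hp, hq⟩ => ⟨q, hq, hp⟩⟩

theorem toWA_series_of_I_eq_singleton {q₀ : A.Q} (hI : A.I = {q₀}) :
    (A.toWA S).series = charSeries S A.lang := by
  classical
  ext w
  rw [toWA_series, relMatrix_mulVec_indicator (R := (A.Path · w ·)) fun _ _ _ => A.path_det, hI,
    Set.indicator_singleton, Pi.one_apply, single_one_dotProduct, charSeries,
    Set.indicator_apply, Set.indicator_apply]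
  exact if_congr (A.mem_lang_iff_of_I_eq_singleton hI).symm rfl rfl

theorem toWA_reversible : (A.toWA S).Reversible := fun _ =>
  ⟨fun _ _ _ h h' => (Fintype.equivFin A.Q).symm.injective
      (A.det _ _ _ _ (rel_of_relMatrix_ne_zero h) (rel_of_relMatrix_ne_zero h')),
    fun _ _ _ h h' => (Fintype.equivFin A.Q).symm.injective
      (A.codet _ _ _ _ (rel_of_relMatrix_ne_zero h) (rel_of_relMatrix_ne_zero h'))⟩

theorem toWA_oneInitial [Nontrivial S] (hA : A.OneInitial) : (A.toWA S).OneInitial := by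
  obtain ⟨q₀, hI⟩ := hA
  refine ⟨Fintype.equivFin A.Q q₀, ?_, fun i hi => ?_⟩
  · simp [hI]
  · have : (Fintype.equivFin A.Q).symm i ∈ A.I := Set.mem_of_indicator_ne_zero hi
    rwa [hI, Set.mem_singleton_iff, Equiv.symm_apply_eq] at this

end RevNFA

variable {S : Type} [Semiring S] [Nontrivial S] {α : Type}

theorem supp_charSeries (L : Set (List α)) : supp (charSeries S L) = L := by
  ext w
  simp [supp, charSeries]

theorem charSeries_mem_Rev1 {L : Set (List α)} (hL : L ∈ RevL1B α) :
    charSeries S L ∈ Rev1 S α := by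
  obtain ⟨A, ⟨q₀, hI⟩, rfl⟩ := hL
  exact ⟨A.toWA S, A.toWA_reversible, A.toWA_oneInitial ⟨q₀, hI⟩,
    A.toWA_series_of_I_eq_singleton hI⟩

end RevWA

open RevWA in
theorem stmt2_general (S : Type) [Semiring S] (hS : (0 : S) ≠ 1)
    (α : Type)
    (L : Set (List α)) (hL : L ∈ RevL1B α) :
    charSeries S L ∈ Rev1 S α ∧ supp (charSeries S L) = L ∧ L ∈ RevL1 S α := by
  have : Nontrivial S := ⟨⟨0, 1, hS⟩⟩
  have hRev1 := charSeries_mem_Rev1 (S := S) hL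
  exact ⟨hRev1, supp_charSeries L, _, hRev1, supp_charSeries L⟩

open RevWA in
theorem stmt2 (S : Type) [Semiring S] (hS : (0 : S) ≠ 1)
    (α : Type) [Fintype α] [Nonempty α]
    (L : Set (List α)) (hL : L ∈ RevL1B α) :
    charSeries S L ∈ Rev1 S α ∧ supp (charSeries S L) = L ∧ L ∈ RevL1 S α :=
  stmt2_general S hS α L hL
end

section
/- Let R be a ring, Σ an alphabet, n : ℕ, and L₁, …, Lₙ ⊆ List Σ languages indexed by Fin n. Then for every word w ∈ List Σ, the element Σ over nonempty subsets X ⊆ Fin n of (−2)^(|X|−1) · 𝟙_{⋂_{i ∈ X} L_i}(w) of R equals 1 if the number of indices i with w ∈ L_i is odd, and equals 0 if that number is even. (Here 𝟙 denotes the characteristic series over R, and (−2)^(|X|−1) is computed in R.) -/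
/-!
The term of `X` is nonzero exactly when `X ⊆ T`, the set of indices with `w ∈ L i`, so the sum
runs over the nonempty subsets of `T`. For any `r`, summing `r ^ (#X - 1)` over them gives
`∑ j < #T, (1 + r) ^ j`, since adding an element to `T` adds `∑ X ⊆ T, r ^ #X = (1 + r) ^ #T`.
For `r = -2` this is the alternating sum `1 - 1 + 1 - ⋯` with `#T` terms.
-/

open Matrix

namespace Finset

variable {ι R : Type*} [Ring R]

theorem sum_powerset_pow_card (r : R) (s : Finset ι) :
    ∑ t ∈ s.powerset, r ^ #t = (1 + r) ^ #s := by
  rw [sum_powerset_apply_card, add_comm (1 : R), (Commute.one_right r).add_pow]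
  refine sum_congr rfl fun m _ => ?_
  rw [one_pow, mul_one, nsmul_eq_mul, Nat.cast_comm]

theorem sum_nonempty_powerset_pow_card_pred [DecidableEq ι] (r : R) (s : Finset ι) :
    ∑ t ∈ s.powerset with t ≠ ∅, r ^ (#t - 1) = ∑ j ∈ range #s, (1 + r) ^ j := by
  induction s using Finset.induction_on with
  | empty => simp [sum_filter]
  | insert a s ha ih =>
    rw [sum_filter] at ih ⊢
    rw [sum_powerset_insert ha, ih, card_insert_of_notMem ha, sum_range_succ,
      ← sum_powerset_pow_card]
    congr 1
    refine sum_congr rfl fun t ht => ?_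
    have hat : a ∉ t := fun h => ha (mem_powerset.1 ht h)
    simp [card_insert_of_notMem hat]

theorem sum_nonempty_powerset_neg_two_pow [DecidableEq ι] (s : Finset ι) :
    ∑ t ∈ s.powerset with t ≠ ∅, (-2 : R) ^ (#t - 1) = if Odd #s then 1 else 0 := by
  norm_num [sum_nonempty_powerset_pow_card_pred, neg_one_geom_sum, ← Nat.not_even_iff_odd]

end Finset

open RevWA in
open Classical in
theorem stmt13_general (R : Type) [Ring R] (α : Type)
    (n : ℕ) (L : Fin n → Set (List α)) (w : List α) :
    ∑ X ∈ Finset.univ.filter (fun X : Finset (Fin n) => X ≠ ∅),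
        (-2 : R) ^ (X.card - 1) * charSeries R (⋂ i ∈ X, L i) w =
      if Odd (Finset.univ.filter (fun i : Fin n => w ∈ L i)).card then (1 : R)
      else 0 := by
  set T := Finset.univ.filter (fun i : Fin n => w ∈ L i)
  rw [← Finset.sum_nonempty_powerset_neg_two_pow T]
  have hchar : ∀ X : Finset (Fin n), charSeries R (⋂ i ∈ X, L i) w = if X ⊆ T then 1 else 0 := by
    intro X
    simp [charSeries, Set.indicator_apply, Finset.subset_iff, T]
  simp only [hchar, mul_ite, mul_one, mul_zero, Finset.sum_ite, Finset.sum_const_zero, add_zero,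
    Finset.filter_filter]
  congr 1
  ext X
  simp [and_comm]

open RevWA in
open Classical in
theorem stmt13 (R : Type) [Ring R] (α : Type) [Fintype α] [Nonempty α]
    (n : ℕ) (L : Fin n → Set (List α)) (w : List α) :
    ∑ X ∈ Finset.univ.filter (fun X : Finset (Fin n) => X ≠ ∅),
        (-2 : R) ^ (X.card - 1) * charSeries R (⋂ i ∈ X, L i) w =
      if Odd (Finset.univ.filter (fun i : Fin n => w ∈ L i)).card then (1 : R)
      else 0 :=
  stmt13_general R α n L w
end

section
/- Let R be a nontrivial commutative ring ((0 : R) ≠ 1) that is locally finite, i.e., for every finite subset s ⊆ R the subring of R generated by s is finite. Let Σ be an alphabet and L ∈ RevL(R,Σ). Then L is recognized by a finite monoid whose idempotents commute: there exist a finite monoid M satisfying e * f = f * e for all idempotents e, f ∈ M, a monoid homomorphism φ : FreeMonoid Σ →* M, and a subset T ⊆ M such that L = φ⁻¹(T). -/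
open Matrix

namespace RevWA

/-- Recognition of a language by a finite monoid whose idempotents commute:
a finite monoid `M` with commuting idempotents, a monoid homomorphism
`φ : FreeMonoid α →* M`, and a subset `T ⊆ M` with `L = φ⁻¹(T)`. -/
structure EComRecognizer (α : Type) (L : Set (List α)) : Type 1 where
  M : Type
  [fintypeM : Fintype M]
  [monoidM : Monoid M]
  idemComm : ∀ e f : M, e * e = e → f * f = f → e * f = f * e
  φ : FreeMonoid α →* M
  T : Set M
  recog : L = {w : List α | φ (FreeMonoid.ofList w) ∈ T}

end RevWA

section Aux

open Matrix RevWA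

variable {S : Type} [Semiring S] {n : ℕ}

lemma rowOk_one : rowOk (1 : Matrix (Fin n) (Fin n) S) := by
  intro i j j' h h'
  by_cases hij : i = j
  · by_cases hij' : i = j'
    · omega
    · simp [Matrix.one_apply, hij'] at h'
  · simp [Matrix.one_apply, hij] at h

lemma colOk_one : colOk (1 : Matrix (Fin n) (Fin n) S) := by
  intro i i' j h h'
  by_cases hij : i = j
  · by_cases hij' : i' = j
    · omega
    · simp [Matrix.one_apply, hij'] at h'
  · simp [Matrix.one_apply, hij] at h

lemma exists_nonzero_of_mul {M N : Matrix (Fin n) (Fin n) S} {i k : Fin n}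
    (h : (M * N) i k ≠ 0) : ∃ j, M i j ≠ 0 ∧ N j k ≠ 0 := by
  by_contra hc
  push_neg at hc
  apply h
  rw [Matrix.mul_apply]
  apply Finset.sum_eq_zero
  intro j _
  by_cases h1 : M i j = 0
  · rw [h1, zero_mul]
  · rw [hc j h1, mul_zero]

lemma rowOk_mul {M N : Matrix (Fin n) (Fin n) S} (hM : rowOk M) (hN : rowOk N) :
    rowOk (M * N) := by
  intro i k k' h h'
  obtain ⟨j, hj1, hj2⟩ := exists_nonzero_of_mul h
  obtain ⟨j', hj1', hj2'⟩ := exists_nonzero_of_mul h'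
  have := hM i j j' hj1 hj1'
  subst this
  exact hN j k k' hj2 hj2'

lemma colOk_mul {M N : Matrix (Fin n) (Fin n) S} (hM : colOk M) (hN : colOk N) :
    colOk (M * N) := by
  intro i i' k h h'
  obtain ⟨j, hj1, hj2⟩ := exists_nonzero_of_mul h
  obtain ⟨j', hj1', hj2'⟩ := exists_nonzero_of_mul h'
  have := hN j j' k hj2 hj2'
  subst this
  exact hM i i' j hj1 hj1'

end Aux

open RevWA in
theorem stmt15 (R : Type) [CommRing R] (hR : (0 : R) ≠ 1)
    (hlf : ∀ s : Finset R, ((Subring.closure (s : Set R) : Subring R) : Set R).Finite)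
    (α : Type) [Fintype α] [Nonempty α]
    (L : Set (List α)) (hL : L ∈ RevL R α) :
    Nonempty (EComRecognizer α L) := by
  classical
  obtain ⟨r, ⟨A, hrev, hser⟩, hsupp⟩ := hL
  set s : Finset R :=
    Finset.image (fun p : α × Fin A.n × Fin A.n => A.trans p.1 p.2.1 p.2.2) Finset.univ with hs
  set R₀ : Subring R := Subring.closure (s : Set R) with hR₀
  have hfin : ((R₀ : Subring R) : Set R).Finite := hlf s
  -- the submonoid of matrices with entries in R₀ and row/col conditions
  let Msub : Submonoid (Matrix (Fin A.n) (Fin A.n) R) :=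
  { carrier := {m | (∀ i j, m i j ∈ R₀) ∧ rowOk m ∧ colOk m}
    one_mem' := by
      refine ⟨fun i j => ?_, rowOk_one, colOk_one⟩
      by_cases hij : i = j
      · subst hij; rw [Matrix.one_apply_eq]; exact Subring.one_mem _
      · rw [Matrix.one_apply_ne hij]; exact Subring.zero_mem _
    mul_mem' := by
      rintro M N ⟨hM0, hM1, hM2⟩ ⟨hN0, hN1, hN2⟩
      refine ⟨fun i j => ?_, rowOk_mul hM1 hN1, colOk_mul hM2 hN2⟩
      rw [Matrix.mul_apply]
      exact Subring.sum_mem _ (fun k _ => Subring.mul_mem _ (hM0 i k) (hN0 k j)) }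
  letI : Fintype ((R₀ : Subring R) : Set R) := hfin.fintype
  letI fM : Fintype ↥Msub := Fintype.ofInjective
    (fun m : ↥Msub => (fun i j => (⟨m.val i j, m.2.1 i j⟩ : ((R₀ : Subring R) : Set R))))
    (by
      intro x y h
      apply Subtype.ext; ext i j
      exact congrArg Subtype.val (congrFun (congrFun h i) j))
  -- generators
  have htrans : ∀ a : α, A.trans a ∈ Msub := by
    intro a
    refine ⟨fun i j => Subring.subset_closure ?_, (hrev a).1, (hrev a).2⟩
    simp only [Finset.coe_image, Set.mem_image, hs]
    exact ⟨(a, i, j), by simp⟩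
  let φ : FreeMonoid α →* ↥Msub := FreeMonoid.lift (fun a => (⟨A.trans a, htrans a⟩ : ↥Msub))
  -- the key: φ computes matWord
  have hφ : ∀ w : List α, ((φ (FreeMonoid.ofList w) : ↥Msub) : Matrix (Fin A.n) (Fin A.n) R)
      = A.matWord w := by
    intro w
    show ((FreeMonoid.lift _ (FreeMonoid.ofList w) : ↥Msub) : Matrix (Fin A.n) (Fin A.n) R) = _
    rw [FreeMonoid.lift_ofList, SubmonoidClass.coe_list_prod, List.map_map]
    rfl
  -- idempotents are diagonal
  have diag : ∀ e : ↥Msub, e * e = e → ∀ i j, i ≠ j →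
      ((e : Matrix (Fin A.n) (Fin A.n) R)) i j = 0 := by
    intro e he i j hij
    by_contra hne
    have hE : (e : Matrix (Fin A.n) (Fin A.n) R) * e = e := congrArg Subtype.val he
    have hjj : (e : Matrix (Fin A.n) (Fin A.n) R) j j = 0 := by
      by_contra hjj
      exact hij (e.2.2.2 i j j hne hjj)
    have hkey : (e : Matrix (Fin A.n) (Fin A.n) R) i j
        = ∑ k, (e : Matrix (Fin A.n) (Fin A.n) R) i k * (e : Matrix (Fin A.n) (Fin A.n) R) k j := by
      conv_lhs => rw [← hE]
      rw [Matrix.mul_apply]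
    rw [Finset.sum_eq_single j (fun k _ hk => by
        by_cases hik : (e : Matrix (Fin A.n) (Fin A.n) R) i k = 0
        · rw [hik, zero_mul]
        · exact absurd (e.2.2.1 i k j hik hne) hk) (by simp)] at hkey
    rw [hjj, mul_zero] at hkey
    exact hne hkey
  refine ⟨{ M := ↥Msub
            fintypeM := fM
            monoidM := inferInstance
            idemComm := ?_
            φ := φ
            T := {m : ↥Msub | A.init ⬝ᵥ (m : Matrix (Fin A.n) (Fin A.n) R).mulVec A.final ≠ 0}
            recog := ?_ }⟩
  · intro e f he hf
    apply Subtype.ext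
    have hef : ((e * f : ↥Msub) : Matrix (Fin A.n) (Fin A.n) R)
        = (e : Matrix (Fin A.n) (Fin A.n) R) * f := rfl
    have hfe : ((f * e : ↥Msub) : Matrix (Fin A.n) (Fin A.n) R)
        = (f : Matrix (Fin A.n) (Fin A.n) R) * e := rfl
    rw [hef, hfe]
    ext i j
    rw [Matrix.mul_apply, Matrix.mul_apply]
    rw [Finset.sum_eq_single i (fun k _ hk => by rw [diag e he i k (Ne.symm hk), zero_mul]) (by simp),
        Finset.sum_eq_single i (fun k _ hk => by rw [diag f hf i k (Ne.symm hk), zero_mul]) (by simp)]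
    by_cases hij : i = j
    · subst hij; exact mul_comm _ _
    · rw [diag f hf i j hij, diag e he i j hij, mul_zero, mul_zero]
  · rw [← hsupp]
    ext w
    simp only [supp, Set.mem_setOf_eq, ← hser, WA.series, hφ w]
end
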